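/- For every n ≥ 1 and every ℓ with 2^{n-1} ≤ ℓ ≤ |V(S_n)| - 1, the Sierpiński gasket graph S_n contains a path of length ℓ between two fixed corner vertices (e.g., the top and bottom-left corners). -/

import Mathlib

/-- Vertex set of the Sierpiński gasket graph `Sₙ`, realized in the triangular
lattice with side length `2^(n-1)`. (`sierpVerts 0` is an unused dummy.) -/
def sierpVerts : ℕ → Finset (ℤ × ℤ)
  | 0 => {(0, 0)}
  | 1 => {(0, 0), (1, 0), (0, 1)}
  | n + 2 =>
      sierpVerts (n + 1) ∪
        (sierpVerts (n + 1)).image (fun p => (p.1 + 2 ^ n, p.2)) ∪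
        (sierpVerts (n + 1)).image (fun p => (p.1, p.2 + 2 ^ n))

/-- Edge set (as ordered pairs, up to the symmetrization below) of `Sₙ`:
`S₁ = K₃`, and `S_{n+2}` is the union of three shifted copies of `S_{n+1}`. -/
def sierpEdges : ℕ → Finset ((ℤ × ℤ) × (ℤ × ℤ))
  | 0 => ∅
  | 1 => {((0, 0), (1, 0)), ((0, 0), (0, 1)), ((1, 0), (0, 1))}
  | n + 2 =>
      sierpEdges (n + 1) ∪
        (sierpEdges (n + 1)).image
          (fun e => ((e.1.1 + 2 ^ n, e.1.2), (e.2.1 + 2 ^ n, e.2.2))) ∪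
        (sierpEdges (n + 1)).image
          (fun e => ((e.1.1, e.1.2 + 2 ^ n), (e.2.1, e.2.2 + 2 ^ n)))

/-- The Sierpiński gasket graph `Sₙ` (meaningful for `n ≥ 1`). -/
def sierpGraph (n : ℕ) : SimpleGraph {p : ℤ × ℤ // p ∈ sierpVerts n} where
  Adj u v := u ≠ v ∧ ((u.1, v.1) ∈ sierpEdges n ∨ (v.1, u.1) ∈ sierpEdges n)
  symm := ⟨by rintro u v ⟨h1, h2⟩; exact ⟨h1.symm, h2.symm⟩⟩
  loopless := ⟨fun u h => h.1 rfl⟩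

instance (n : ℕ) : DecidableRel (sierpGraph n).Adj := fun u v =>
  inferInstanceAs (Decidable (_ ∧ _))

/-- The three corner (degree-two) vertices of `Sₙ`. -/
def sierpCorners (n : ℕ) : Finset (ℤ × ℤ) :=
  {(0, 0), (2 ^ (n - 1), 0), (0, 2 ^ (n - 1))}

/-- Symmetrized adjacency. -/
def sAdj (n : ℕ) (p q : ℤ × ℤ) : Prop :=
  (p, q) ∈ sierpEdges n ∨ (q, p) ∈ sierpEdges n

instance (n : ℕ) : DecidableRel (sAdj n) := fun _ _ =>
  inferInstanceAs (Decidable (_ ∨ _))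

/-- `L` is a path list from `u` to `v` of length `l` in `Sₙ`. -/
def IsGP (n : ℕ) (u v : ℤ × ℤ) (l : ℕ) (L : List (ℤ × ℤ)) : Prop :=
  L.Chain' (sAdj n) ∧ L.Nodup ∧ (∀ p ∈ L, p ∈ sierpVerts n) ∧
    L.head? = some u ∧ L.getLast? = some v ∧ L.length = l + 1

lemma sierp_bounds : ∀ n, ∀ p ∈ sierpVerts (n + 1),
    0 ≤ p.1 ∧ 0 ≤ p.2 ∧ p.1 + p.2 ≤ 2 ^ n := by
  intro n
  induction n with
  | zero => decide
  | succ m ih =>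
    intro p hp
    rw [show m + 1 + 1 = m + 2 from rfl, sierpVerts] at hp
    simp only [Finset.mem_union, Finset.mem_image] at hp
    have h2 : (2:ℤ)^m ≤ 2^(m+1) := by
      have : (2:ℤ)^m > 0 := by positivity
      rw [pow_succ]; linarith
    rcases hp with (hp | ⟨q, hq, rfl⟩) | ⟨q, hq, rfl⟩
    · have := ih p hp; exact ⟨this.1, this.2.1, this.2.2.trans h2⟩
    · obtain ⟨h1, h2', h3⟩ := ih q hq
      have h0 : (0:ℤ) < 2^m := by positivity
      refine ⟨?_, ?_, ?_⟩ <;> simp only [pow_succ] <;> linarith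
    · obtain ⟨h1, h2', h3⟩ := ih q hq
      have h0 : (0:ℤ) < 2^m := by positivity
      refine ⟨?_, ?_, ?_⟩ <;> simp only [pow_succ] <;> linarith

def fX (m : ℕ) (p : ℤ × ℤ) : ℤ × ℤ := (p.1 + 2 ^ m, p.2)
def fY (m : ℕ) (p : ℤ × ℤ) : ℤ × ℤ := (p.1, p.2 + 2 ^ m)

lemma fX_inj (m : ℕ) : Function.Injective (fX m) := by
  intro p q h; simp only [fX, Prod.mk.injEq] at h; exact Prod.ext (by linarith [h.1]) h.2

lemma fY_inj (m : ℕ) : Function.Injective (fY m) := by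
  intro p q h; simp only [fY, Prod.mk.injEq] at h; exact Prod.ext h.1 (by linarith [h.2])

lemma vA {m : ℕ} {p : ℤ × ℤ} (h : p ∈ sierpVerts (m + 1)) : p ∈ sierpVerts (m + 2) := by
  rw [sierpVerts]; simp only [Finset.mem_union]; left; left; exact h

lemma vB {m : ℕ} {p : ℤ × ℤ} (h : p ∈ sierpVerts (m + 1)) : fX m p ∈ sierpVerts (m + 2) := by
  rw [sierpVerts]; simp only [Finset.mem_union, Finset.mem_image]
  exact Or.inl (Or.inr ⟨p, h, rfl⟩)

lemma vC {m : ℕ} {p : ℤ × ℤ} (h : p ∈ sierpVerts (m + 1)) : fY m p ∈ sierpVerts (m + 2) := by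
  rw [sierpVerts]; simp only [Finset.mem_union, Finset.mem_image]
  exact Or.inr ⟨p, h, rfl⟩

lemma aA {m : ℕ} {p q : ℤ × ℤ} (h : sAdj (m + 1) p q) : sAdj (m + 2) p q := by
  rcases h with h | h <;> [left; right] <;>
    (rw [sierpEdges]; simp only [Finset.mem_union]; exact Or.inl (Or.inl h))

lemma aB {m : ℕ} {p q : ℤ × ℤ} (h : sAdj (m + 1) p q) : sAdj (m + 2) (fX m p) (fX m q) := by
  rcases h with h | h <;> [left; right] <;>
    (rw [sierpEdges]; simp only [Finset.mem_union, Finset.mem_image];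
     exact Or.inl (Or.inr ⟨_, h, rfl⟩))

lemma aC {m : ℕ} {p q : ℤ × ℤ} (h : sAdj (m + 1) p q) : sAdj (m + 2) (fY m p) (fY m q) := by
  rcases h with h | h <;> [left; right] <;>
    (rw [sierpEdges]; simp only [Finset.mem_union, Finset.mem_image];
     exact Or.inr ⟨_, h, rfl⟩)

/-- Intersection of copy A and copy B. -/
lemma dAB {m : ℕ} {x y : ℤ × ℤ} (hx : x ∈ sierpVerts (m + 1))
    (hy : y ∈ sierpVerts (m + 1)) (h : x = fX m y) : x = (2 ^ m, 0) := by
  obtain ⟨hx1, hx2, hx3⟩ := sierp_bounds m x hx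
  obtain ⟨hy1, hy2, hy3⟩ := sierp_bounds m y hy
  have h1 : x.1 = y.1 + 2 ^ m := by rw [h]; rfl
  have h2 : x.2 = y.2 := by rw [h]; rfl
  have : x.1 = 2 ^ m ∧ x.2 = 0 := by constructor <;> linarith
  exact Prod.ext this.1 this.2

lemma dAC {m : ℕ} {x y : ℤ × ℤ} (hx : x ∈ sierpVerts (m + 1))
    (hy : y ∈ sierpVerts (m + 1)) (h : x = fY m y) : x = (0, 2 ^ m) := by
  obtain ⟨hx1, hx2, hx3⟩ := sierp_bounds m x hx
  obtain ⟨hy1, hy2, hy3⟩ := sierp_bounds m y hy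
  have h1 : x.1 = y.1 := by rw [h]; rfl
  have h2 : x.2 = y.2 + 2 ^ m := by rw [h]; rfl
  have : x.1 = 0 ∧ x.2 = 2 ^ m := by constructor <;> linarith
  exact Prod.ext this.1 this.2

lemma dBC {m : ℕ} {x y : ℤ × ℤ} (hx : x ∈ sierpVerts (m + 1))
    (hy : y ∈ sierpVerts (m + 1)) (h : fX m x = fY m y) : fX m x = (2 ^ m, 2 ^ m) := by
  obtain ⟨hx1, hx2, hx3⟩ := sierp_bounds m x hx
  obtain ⟨hy1, hy2, hy3⟩ := sierp_bounds m y hy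
  have h1 : x.1 + 2 ^ m = y.1 := congrArg Prod.fst h
  have h2 : x.2 = y.2 + 2 ^ m := congrArg Prod.snd h
  have : x.1 + 2 ^ m = 2 ^ m ∧ x.2 = 2 ^ m := by constructor <;> linarith
  exact Prod.ext this.1 this.2

/-- Corner memberships -/
lemma c0 : ∀ m, ((0 : ℤ), (0 : ℤ)) ∈ sierpVerts (m + 1) := by
  intro m
  induction m with
  | zero => decide
  | succ k ih => exact vA ih

lemma cX : ∀ m, (((2 : ℤ) ^ m, (0 : ℤ))) ∈ sierpVerts (m + 1) := by
  intro m
  induction m with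
  | zero => decide
  | succ k ih =>
    have := vB (m := k) ih
    simpa [fX, pow_succ, mul_two] using this

lemma cY : ∀ m, (((0 : ℤ), (2 : ℤ) ^ m)) ∈ sierpVerts (m + 1) := by
  intro m
  induction m with
  | zero => decide
  | succ k ih =>
    have := vC (m := k) ih
    simpa [fY, pow_succ, mul_two] using this

lemma sierp_card : ∀ m, 2 * (sierpVerts (m + 1)).card = 3 ^ (m + 1) + 3 := by
  intro m
  induction m with
  | zero => decide
  | succ k ih =>
    have hpow : (0 : ℤ) < 2 ^ k := by positivity
    set A := sierpVerts (k + 1) with hA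
    have hrw : sierpVerts (k + 2) = A ∪ A.image (fX k) ∪ A.image (fY k) := by
      rw [sierpVerts]; rfl
    have hBcard : (A.image (fX k)).card = A.card := Finset.card_image_of_injective _ (fX_inj k)
    have hCcard : (A.image (fY k)).card = A.card := Finset.card_image_of_injective _ (fY_inj k)
    have hABi : A ∩ A.image (fX k) = {((2 : ℤ) ^ k, 0)} := by
      ext x
      simp only [Finset.mem_inter, Finset.mem_image, Finset.mem_singleton]
      constructor
      · rintro ⟨hx, y, hy, hxy⟩
        exact (dAB (hxy ▸ hx) hy hxy.symm)
      · rintro rfl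
        exact ⟨cX k, (0, 0), c0 k, by simp [fX]⟩
    have hACBCi : (A ∪ A.image (fX k)) ∩ A.image (fY k) =
        {((0 : ℤ), (2 : ℤ) ^ k), ((2 : ℤ) ^ k, (2 : ℤ) ^ k)} := by
      ext x
      simp only [Finset.mem_inter, Finset.mem_union, Finset.mem_image, Finset.mem_insert,
        Finset.mem_singleton]
      constructor
      · rintro ⟨hx | ⟨y, hy, rfl⟩, z, hz, hzx⟩
        · exact Or.inl (dAC hx hz hzx.symm)
        · exact Or.inr (dBC hy hz hzx.symm)
      · rintro (rfl | rfl)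
        · exact ⟨Or.inl (cY k), (0, 0), c0 k, by simp [fY]⟩
        · exact ⟨Or.inr ⟨(0, 2 ^ k), cY k, by simp [fX]⟩, (2 ^ k, 0), cX k, by simp [fY]⟩
    have h1 := Finset.card_union_add_card_inter A (A.image (fX k))
    have h2 := Finset.card_union_add_card_inter (A ∪ A.image (fX k)) (A.image (fY k))
    rw [hABi] at h1
    rw [hACBCi] at h2
    have hne : ((0 : ℤ), (2 : ℤ) ^ k) ≠ ((2 : ℤ) ^ k, (2 : ℤ) ^ k) := by
      intro h; have := congrArg Prod.fst h; simp at this; omega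
    have hc2 : ({((0 : ℤ), (2 : ℤ) ^ k), ((2 : ℤ) ^ k, (2 : ℤ) ^ k)} : Finset (ℤ × ℤ)).card = 2 := by
      rw [Finset.card_insert_of_notMem (by simpa using hne), Finset.card_singleton]
    rw [hc2] at h2
    simp only [Finset.card_singleton] at h1
    rw [hrw]
    have h3 : (3 : ℕ) ^ (k + 2) = 3 * 3 ^ (k + 1) := by ring
    omega

lemma sAdj_symm {n : ℕ} {p q : ℤ × ℤ} (h : sAdj n p q) : sAdj n q p := h.symm

lemma IsGP.reverse {n : ℕ} {u v : ℤ × ℤ} {l : ℕ} {L : List (ℤ × ℤ)}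
    (h : IsGP n u v l L) : IsGP n v u l L.reverse := by
  obtain ⟨c, nd, mem, hh, hl, len⟩ := h
  refine ⟨?_, List.nodup_reverse.mpr nd, fun p hp => mem p (List.mem_reverse.mp hp), ?_, ?_, by simpa using len⟩
  · rw [List.Chain', List.isChain_reverse]
    exact List.IsChain.imp (fun a b hab => sAdj_symm hab) c
  · rw [List.head?_reverse]; exact hl
  · rw [List.getLast?_reverse]; exact hh

lemma IsGP.map {n m : ℕ} {u v : ℤ × ℤ} {l : ℕ} {L : List (ℤ × ℤ)}
    (f : ℤ × ℤ → ℤ × ℤ) (hinj : Function.Injective f)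
    (hvm : ∀ p ∈ sierpVerts n, f p ∈ sierpVerts m)
    (ha : ∀ p q, sAdj n p q → sAdj m (f p) (f q))
    (h : IsGP n u v l L) : IsGP m (f u) (f v) l (L.map f) := by
  obtain ⟨c, nd, mem, hh, hl, len⟩ := h
  refine ⟨List.isChain_map_of_isChain f ha c, nd.map hinj, ?_, ?_, ?_, by simpa using len⟩
  · intro p hp
    obtain ⟨q, hq, rfl⟩ := List.mem_map.mp hp
    exact hvm q (mem q hq)
  · rw [List.head?_map, hh]; rfl
  · rw [List.getLast?_map, hl]; rfl

lemma IsGP.incl {m : ℕ} {u v : ℤ × ℤ} {l : ℕ} {L : List (ℤ × ℤ)}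
    (h : IsGP (m + 1) u v l L) : IsGP (m + 2) u v l L := by
  have := h.map id (fun a b hab => hab) (fun p hp => vA hp) (fun p q => aA)
  simpa using this

lemma IsGP.append {n : ℕ} {u g v : ℤ × ℤ} {l1 l2 : ℕ} {L1 L2 : List (ℤ × ℤ)}
    (h1 : IsGP n u g l1 L1) (h2 : IsGP n g v l2 L2)
    (hdisj : ∀ x ∈ L1, ∀ y ∈ L2, x = y → x = g) :
    IsGP n u v (l1 + l2) (L1 ++ L2.tail) := by
  obtain ⟨c1, n1, m1, hh1, hl1, len1⟩ := h1
  obtain ⟨c2, n2, m2, hh2, hl2, len2⟩ := h2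
  obtain ⟨t, rfl⟩ : ∃ t, L2 = g :: t := by
    cases L2 with
    | nil => simp at hh2
    | cons a t => exact ⟨t, by simpa using hh2⟩
  have hgt : g ∉ t := (List.nodup_cons.mp n2).1
  refine ⟨?_, ?_, ?_, ?_, ?_, ?_⟩
  · rw [List.Chain', List.isChain_append]
    refine ⟨c1, (List.isChain_cons.mp c2).2, ?_⟩
    intro x hx y hy
    have hx' : x = g := by rw [hl1] at hx; exact (Option.some_inj.mp hx.symm)
    subst hx'
    exact (List.isChain_cons.mp c2).1 y hy
  · rw [List.nodup_append]
    refine ⟨n1, (List.nodup_cons.mp n2).2, ?_⟩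
    intro x hx1 y hx2 hxy; subst hxy
    have := hdisj x hx1 x (List.mem_cons_of_mem _ hx2) rfl
    subst this
    exact hgt hx2
  · intro p hp
    rcases List.mem_append.mp hp with h | h
    · exact m1 p h
    · exact m2 p (List.mem_cons_of_mem _ h)
  · cases L1 with
    | nil => simp at hh1
    | cons a s => simpa using hh1
  · cases t with
    | nil =>
      simp only [List.tail_cons, List.append_nil]
      have : g = v := by simpa using hl2
      rw [hl1, this]
    | cons b t' =>
      rw [List.tail_cons, List.getLast?_append]
      rw [List.getLast?_cons_cons] at hl2
      rw [hl2]; rfl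
  · simp only [List.length_append, List.length_tail]
    simp only [List.length_cons] at len2 ⊢
    omega

lemma swap_verts : ∀ m, ∀ p ∈ sierpVerts (m + 1), (p.2, p.1) ∈ sierpVerts (m + 1) := by
  intro m
  induction m with
  | zero => decide
  | succ k ih =>
    intro p hp
    rw [show k + 1 + 1 = k + 2 from rfl, sierpVerts] at hp ⊢
    simp only [Finset.mem_union, Finset.mem_image] at hp ⊢
    rcases hp with (hp | ⟨q, hq, rfl⟩) | ⟨q, hq, rfl⟩
    · exact Or.inl (Or.inl (ih p hp))
    · exact Or.inr ⟨(q.2, q.1), ih q hq, rfl⟩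
    · exact Or.inl (Or.inr ⟨(q.2, q.1), ih q hq, rfl⟩)

lemma swap_adj : ∀ m, ∀ p q, sAdj (m + 1) p q → sAdj (m + 1) (p.2, p.1) (q.2, q.1) := by
  intro m
  induction m with
  | zero =>
    intro p q h
    unfold sAdj sierpEdges at h ⊢
    simp only [Finset.mem_insert, Finset.mem_singleton, Prod.mk.injEq] at h ⊢
    rcases h with (⟨rfl, rfl⟩ | ⟨rfl, rfl⟩ | ⟨rfl, rfl⟩) | (⟨rfl, rfl⟩ | ⟨rfl, rfl⟩ | ⟨rfl, rfl⟩) <;>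
      simp
  | succ k ih =>
    intro p q h
    have key : ∀ a b : ℤ × ℤ, (a, b) ∈ sierpEdges (k + 2) →
        sAdj (k + 2) (a.2, a.1) (b.2, b.1) := by
      intro a b hab
      rw [sierpEdges] at hab
      simp only [Finset.mem_union, Finset.mem_image] at hab
      rcases hab with (hab | ⟨e, he, heq⟩) | ⟨e, he, heq⟩
      · exact aA (ih a b (Or.inl hab))
      · obtain ⟨h1, h2⟩ := Prod.mk.injEq .. ▸ heq
        have := ih e.1 e.2 (Or.inl he)
        have h3 := aC (m := k) this
        rw [show a = (e.1.1 + 2 ^ k, e.1.2) from h1.symm, show b = (e.2.1 + 2 ^ k, e.2.2) from h2.symm]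
        exact h3
      · obtain ⟨h1, h2⟩ := Prod.mk.injEq .. ▸ heq
        have := ih e.1 e.2 (Or.inl he)
        have h3 := aB (m := k) this
        rw [show a = (e.1.1, e.1.2 + 2 ^ k) from h1.symm, show b = (e.2.1, e.2.2 + 2 ^ k) from h2.symm]
        exact h3
    rcases h with h | h
    · exact key p q h
    · exact sAdj_symm (key q p h)

lemma pow43 : ∀ k : ℕ, 4 * 2 ^ k ≤ 3 * 3 ^ k + 3 := by
  intro k
  induction k with
  | zero => norm_num
  | succ j ih =>
    have h1 : (1 : ℕ) ≤ 3 ^ j := Nat.one_le_pow _ _ (by norm_num)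
    rw [pow_succ, pow_succ]
    omega

lemma two_le_three_pow (k : ℕ) : 2 ^ k ≤ 3 ^ k := Nat.pow_le_pow_left (by norm_num) k

lemma toWalk_aux {n : ℕ} : ∀ (L : List (ℤ × ℤ)), L.Chain' (sAdj n) → L.Nodup →
    (∀ p ∈ L, p ∈ sierpVerts n) →
    ∀ (u v : ℤ × ℤ) (hu : u ∈ sierpVerts n) (hv : v ∈ sierpVerts n),
      L.head? = some u → L.getLast? = some v →
      ∃ w : (sierpGraph n).Walk ⟨u, hu⟩ ⟨v, hv⟩, w.support.map Subtype.val = L := by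
  intro L
  induction L with
  | nil => intro _ _ _ u v hu hv h _; simp at h
  | cons a t ih =>
    intro hc hnd hm u v hu hv hh hlast
    have hau : a = u := by simpa using hh
    subst hau
    cases t with
    | nil =>
      have hv' : a = v := by simpa using hlast
      subst hv'
      exact ⟨SimpleGraph.Walk.nil, by simp⟩
    | cons b t' =>
      have hadj : sAdj n a b := (List.isChain_cons_cons.mp hc).1
      have hb : b ∈ sierpVerts n := hm b (by simp)
      have hne : a ≠ b := by
        have h1 := (List.nodup_cons.mp hnd).1
        intro h; exact h1 (h ▸ (List.mem_cons_self (a := b) (l := t')))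
      obtain ⟨w, hw⟩ := ih (List.isChain_cons_cons.mp hc).2 (List.nodup_cons.mp hnd).2
        (fun p hp => hm p (List.mem_cons_of_mem _ hp)) b v hb hv rfl
        (by rw [← hlast, List.getLast?_cons_cons])
      have hAdj : (sierpGraph n).Adj ⟨a, hu⟩ ⟨b, hb⟩ :=
        ⟨fun h => hne (congrArg Subtype.val h), hadj⟩
      exact ⟨SimpleGraph.Walk.cons hAdj w, by simp [hw]⟩

lemma IsGP.toWalk {n : ℕ} {u v : ℤ × ℤ} {l : ℕ} {L : List (ℤ × ℤ)}
    (h : IsGP n u v l L) (hu : u ∈ sierpVerts n) (hv : v ∈ sierpVerts n) :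
    ∃ w : (sierpGraph n).Walk ⟨u, hu⟩ ⟨v, hv⟩, w.IsPath ∧ w.length = l := by
  obtain ⟨c, nd, mem, hh, hl, len⟩ := h
  obtain ⟨w, hw⟩ := toWalk_aux L c nd mem u v hu hv hh hl
  refine ⟨w, ?_, ?_⟩
  · rw [SimpleGraph.Walk.isPath_def]
    have h2 : (w.support.map Subtype.val).Nodup := hw ▸ nd
    exact h2.of_map _
  · have h3 := congrArg List.length hw
    rw [List.length_map, SimpleGraph.Walk.length_support, len] at h3
    omega

lemma pow_succ_two (k : ℕ) : ((2 : ℤ) ^ (k + 1)) = 2 ^ k + 2 ^ k := by ring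

/-- Route A→B for corner pair 0→X in `S_{k+2}`. -/
lemma T1 {k a b : ℕ} {La Lb : List (ℤ × ℤ)}
    (ha : IsGP (k + 1) (0, 0) (2 ^ k, 0) a La)
    (hb : IsGP (k + 1) (0, 0) (2 ^ k, 0) b Lb) :
    ∃ L, IsGP (k + 2) (0, 0) (2 ^ (k + 1), 0) (a + b) L ∧
      ((0 : ℤ), (2 : ℤ) ^ (k + 1)) ∉ L := by
  have hb' := hb.map (fX k) (fX_inj k) (fun p hp => vB hp) (fun p q => aB)
  rw [show fX k ((0 : ℤ), (0 : ℤ)) = ((2 : ℤ) ^ k, 0) by simp [fX],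
    show fX k ((2 : ℤ) ^ k, (0 : ℤ)) = ((2 : ℤ) ^ (k + 1), 0) by
      simp [fX, pow_succ_two]] at hb'
  have hdisj : ∀ x ∈ La, ∀ y ∈ Lb.map (fX k), x = y → x = ((2 : ℤ) ^ k, 0) := by
    intro x hx y hy heq
    obtain ⟨q, hq, rfl⟩ := List.mem_map.mp hy
    exact dAB (ha.2.2.1 x hx) (hb.2.2.1 q hq) heq
  refine ⟨_, ha.incl.append hb' hdisj, ?_⟩
  intro hmem
  have hp2 : (0 : ℤ) < 2 ^ k := by positivity
  rcases List.mem_append.mp hmem with h | h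
  · obtain ⟨h1, h2, h3⟩ := sierp_bounds k _ (ha.2.2.1 _ h)
    simp only [pow_succ_two] at h2 h3
    norm_num at h1 h2 h3
    linarith
  · obtain ⟨q, hq, hfq⟩ := List.mem_map.mp (List.mem_of_mem_tail h)
    obtain ⟨h1, h2, h3⟩ := sierp_bounds k q (hb.2.2.1 q hq)
    have := congrArg Prod.fst hfq
    simp only [fX] at this
    norm_num at this
    linarith

/-- Route A→C→B for corner pair 0→X in `S_{k+2}`. -/
lemma T2 {k a c b : ℕ} {La Lc Lb : List (ℤ × ℤ)}
    (ha : IsGP (k + 1) (0, 0) (0, 2 ^ k) a La) (hav : ((2 : ℤ) ^ k, (0 : ℤ)) ∉ La)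
    (hc : IsGP (k + 1) (0, 0) (2 ^ k, 0) c Lc)
    (hb : IsGP (k + 1) (0, 2 ^ k) (2 ^ k, 0) b Lb) :
    ∃ L, IsGP (k + 2) (0, 0) (2 ^ (k + 1), 0) (a + c + b) L ∧
      (((0 : ℤ), (2 : ℤ) ^ (k + 1)) ∈ L → ((0 : ℤ), (2 : ℤ) ^ k) ∈ Lc) := by
  have hp2 : (0 : ℤ) < 2 ^ k := by positivity
  have hc' := hc.map (fY k) (fY_inj k) (fun p hp => vC hp) (fun p q => aC)
  rw [show fY k ((0 : ℤ), (0 : ℤ)) = ((0 : ℤ), (2 : ℤ) ^ k) by simp [fY],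
    show fY k ((2 : ℤ) ^ k, (0 : ℤ)) = ((2 : ℤ) ^ k, (2 : ℤ) ^ k) by simp [fY]] at hc'
  have hb' := hb.map (fX k) (fX_inj k) (fun p hp => vB hp) (fun p q => aB)
  rw [show fX k ((0 : ℤ), (2 : ℤ) ^ k) = ((2 : ℤ) ^ k, (2 : ℤ) ^ k) by simp [fX],
    show fX k ((2 : ℤ) ^ k, (0 : ℤ)) = ((2 : ℤ) ^ (k + 1), 0) by
      simp [fX, pow_succ_two]] at hb'
  have hd1 : ∀ x ∈ La, ∀ y ∈ Lc.map (fY k), x = y → x = ((0 : ℤ), (2 : ℤ) ^ k) := by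
    intro x hx y hy heq
    obtain ⟨q, hq, rfl⟩ := List.mem_map.mp hy
    exact dAC (ha.2.2.1 x hx) (hc.2.2.1 q hq) heq
  have h12 := ha.incl.append hc' hd1
  have hd2 : ∀ x ∈ La ++ (Lc.map (fY k)).tail, ∀ y ∈ Lb.map (fX k), x = y →
      x = ((2 : ℤ) ^ k, (2 : ℤ) ^ k) := by
    intro x hx y hy heq
    obtain ⟨r, hr, rfl⟩ := List.mem_map.mp hy
    rcases List.mem_append.mp hx with h | h
    · exact absurd (dAB (ha.2.2.1 x h) (hb.2.2.1 r hr) heq ▸ h) hav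
    · obtain ⟨q, hq, rfl⟩ := List.mem_map.mp (List.mem_of_mem_tail h)
      rw [heq]
      exact (dBC (hb.2.2.1 r hr) (hc.2.2.1 q hq) (heq.symm)) 
  refine ⟨_, h12.append hb' hd2, ?_⟩
  intro hmem
  rcases List.mem_append.mp hmem with h | h
  · rcases List.mem_append.mp h with h' | h'
    · obtain ⟨h1, h2, h3⟩ := sierp_bounds k _ (ha.2.2.1 _ h')
      simp only [pow_succ_two] at h2 h3
      norm_num at h1 h2 h3
      linarith
    · obtain ⟨q, hq, hfq⟩ := List.mem_map.mp (List.mem_of_mem_tail h')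
      have h1 := congrArg Prod.fst hfq
      have h2 := congrArg Prod.snd hfq
      simp only [fY] at h1 h2
      norm_num [pow_succ_two] at h1 h2
      have : q = ((0 : ℤ), (2 : ℤ) ^ k) := Prod.ext h1 (by linarith)
      exact this ▸ hq
  · obtain ⟨q, hq, hfq⟩ := List.mem_map.mp (List.mem_of_mem_tail h)
    obtain ⟨h1, h2, h3⟩ := sierp_bounds k q (hb.2.2.1 q hq)
    have := congrArg Prod.fst hfq
    simp only [fX] at this
    norm_num at this
    linarith

/-- Route B→C for corner pair X→Y in `S_{k+2}`. -/
lemma T3 {k a b : ℕ} {La Lb : List (ℤ × ℤ)}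
    (ha : IsGP (k + 1) (2 ^ k, 0) (0, 2 ^ k) a La)
    (hb : IsGP (k + 1) (2 ^ k, 0) (0, 2 ^ k) b Lb) :
    ∃ L, IsGP (k + 2) (2 ^ (k + 1), 0) (0, 2 ^ (k + 1)) (a + b) L ∧
      ((0 : ℤ), (0 : ℤ)) ∉ L := by
  have hp2 : (0 : ℤ) < 2 ^ k := by positivity
  have ha' := ha.map (fX k) (fX_inj k) (fun p hp => vB hp) (fun p q => aB)
  rw [show fX k ((2 : ℤ) ^ k, (0 : ℤ)) = ((2 : ℤ) ^ (k + 1), 0) by simp [fX, pow_succ_two],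
    show fX k ((0 : ℤ), (2 : ℤ) ^ k) = ((2 : ℤ) ^ k, (2 : ℤ) ^ k) by simp [fX]] at ha'
  have hb' := hb.map (fY k) (fY_inj k) (fun p hp => vC hp) (fun p q => aC)
  rw [show fY k ((2 : ℤ) ^ k, (0 : ℤ)) = ((2 : ℤ) ^ k, (2 : ℤ) ^ k) by simp [fY],
    show fY k ((0 : ℤ), (2 : ℤ) ^ k) = ((0 : ℤ), (2 : ℤ) ^ (k + 1)) by
      simp [fY, pow_succ_two]] at hb'
  have hdisj : ∀ x ∈ La.map (fX k), ∀ y ∈ Lb.map (fY k), x = y →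
      x = ((2 : ℤ) ^ k, (2 : ℤ) ^ k) := by
    intro x hx y hy heq
    obtain ⟨q, hq, rfl⟩ := List.mem_map.mp hx
    obtain ⟨r, hr, rfl⟩ := List.mem_map.mp hy
    exact dBC (ha.2.2.1 q hq) (hb.2.2.1 r hr) heq
  refine ⟨_, ha'.append hb' hdisj, ?_⟩
  intro hmem
  rcases List.mem_append.mp hmem with h | h
  · obtain ⟨q, hq, hfq⟩ := List.mem_map.mp h
    obtain ⟨h1, h2, h3⟩ := sierp_bounds k q (ha.2.2.1 q hq)
    have := congrArg Prod.fst hfq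
    simp only [fX] at this
    norm_num at this
    linarith
  · obtain ⟨q, hq, hfq⟩ := List.mem_map.mp (List.mem_of_mem_tail h)
    obtain ⟨h1, h2, h3⟩ := sierp_bounds k q (hb.2.2.1 q hq)
    have := congrArg Prod.snd hfq
    simp only [fY] at this
    norm_num at this
    linarith

/-- Route B→A→C for corner pair X→Y in `S_{k+2}`. -/
lemma T4 {k a c b : ℕ} {La Lc Lb : List (ℤ × ℤ)}
    (ha : IsGP (k + 1) (2 ^ k, 0) (0, 0) a La) (hav : ((0 : ℤ), (2 : ℤ) ^ k) ∉ La)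
    (hc : IsGP (k + 1) (2 ^ k, 0) (0, 2 ^ k) c Lc)
    (hb : IsGP (k + 1) (0, 0) (0, 2 ^ k) b Lb) :
    ∃ L, IsGP (k + 2) (2 ^ (k + 1), 0) (0, 2 ^ (k + 1)) (a + c + b) L ∧
      (((0 : ℤ), (0 : ℤ)) ∈ L → ((0 : ℤ), (0 : ℤ)) ∈ Lc) := by
  have hp2 : (0 : ℤ) < 2 ^ k := by positivity
  have ha' := ha.map (fX k) (fX_inj k) (fun p hp => vB hp) (fun p q => aB)
  rw [show fX k ((2 : ℤ) ^ k, (0 : ℤ)) = ((2 : ℤ) ^ (k + 1), 0) by simp [fX, pow_succ_two],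
    show fX k ((0 : ℤ), (0 : ℤ)) = ((2 : ℤ) ^ k, (0 : ℤ)) by simp [fX]] at ha'
  have hb' := hb.map (fY k) (fY_inj k) (fun p hp => vC hp) (fun p q => aC)
  rw [show fY k ((0 : ℤ), (0 : ℤ)) = ((0 : ℤ), (2 : ℤ) ^ k) by simp [fY],
    show fY k ((0 : ℤ), (2 : ℤ) ^ k) = ((0 : ℤ), (2 : ℤ) ^ (k + 1)) by
      simp [fY, pow_succ_two]] at hb'
  have hd1 : ∀ x ∈ La.map (fX k), ∀ y ∈ Lc, x = y → x = ((2 : ℤ) ^ k, (0 : ℤ)) := by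
    intro x hx y hy heq
    obtain ⟨q, hq, rfl⟩ := List.mem_map.mp hx
    subst heq
    exact dAB (hc.2.2.1 _ hy) (ha.2.2.1 q hq) rfl
  have h12 := ha'.append hc.incl hd1
  have hd2 : ∀ x ∈ La.map (fX k) ++ Lc.tail, ∀ y ∈ Lb.map (fY k), x = y →
      x = ((0 : ℤ), (2 : ℤ) ^ k) := by
    intro x hx y hy heq
    obtain ⟨r, hr, rfl⟩ := List.mem_map.mp hy
    rcases List.mem_append.mp hx with h | h
    · obtain ⟨q, hq, rfl⟩ := List.mem_map.mp h
      have hgb := dBC (ha.2.2.1 q hq) (hb.2.2.1 r hr) heq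
      -- fX q = (2^k, 2^k), so q = (0, 2^k) ∈ La, contradiction
      have hq1 := congrArg Prod.fst hgb
      have hq2 := congrArg Prod.snd hgb
      simp only [fX] at hq1 hq2
      norm_num at hq1 hq2
      exact absurd ((Prod.ext (by linarith : q.1 = 0) hq2 : q = ((0:ℤ), (2:ℤ)^k)) ▸ hq) hav
    · have hx' : x ∈ Lc := List.mem_of_mem_tail h
      exact dAC (hc.2.2.1 x hx') (hb.2.2.1 r hr) heq
  refine ⟨_, h12.append hb' hd2, ?_⟩
  intro hmem
  rcases List.mem_append.mp hmem with h | h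
  · rcases List.mem_append.mp h with h' | h'
    · obtain ⟨q, hq, hfq⟩ := List.mem_map.mp h'
      obtain ⟨h1, h2, h3⟩ := sierp_bounds k q (ha.2.2.1 q hq)
      have := congrArg Prod.fst hfq
      simp only [fX] at this
      norm_num at this
      linarith
    · exact List.mem_of_mem_tail h'
  · obtain ⟨q, hq, hfq⟩ := List.mem_map.mp (List.mem_of_mem_tail h)
    obtain ⟨h1, h2, h3⟩ := sierp_bounds k q (hb.2.2.1 q hq)
    have := congrArg Prod.snd hfq
    simp only [fY] at this
    norm_num at this
    linarith

def swp (p : ℤ × ℤ) : ℤ × ℤ := (p.2, p.1)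

lemma swp_inj : Function.Injective swp := fun p q h =>
  Prod.ext (congrArg Prod.snd h) (congrArg Prod.fst h)

lemma IsGP.swap {m l : ℕ} {u v : ℤ × ℤ} {L : List (ℤ × ℤ)} (h : IsGP (m + 1) u v l L) :
    IsGP (m + 1) (u.2, u.1) (v.2, v.1) l (L.map swp) :=
  h.map swp swp_inj (swap_verts m) (swap_adj m)

lemma mem_swap {a b : ℤ} {L : List (ℤ × ℤ)} : (a, b) ∈ L.map swp ↔ (b, a) ∈ L := by
  constructor
  · intro h
    obtain ⟨q, hq, hqe⟩ := List.mem_map.mp h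
    have : q = (b, a) := by
      have h1 := congrArg Prod.fst hqe
      have h2 := congrArg Prod.snd hqe
      exact Prod.ext h2 h1
    exact this ▸ hq
  · intro h
    exact List.mem_map.mpr ⟨(b, a), h, rfl⟩

lemma key : ∀ m : ℕ, ∀ l : ℕ,
    (2 ^ m ≤ l → l + 1 ≤ (sierpVerts (m + 1)).card →
      ∃ L, IsGP (m + 1) (0, 0) (2 ^ m, 0) l L) ∧
    (2 ^ m ≤ l → l + 2 ≤ (sierpVerts (m + 1)).card →
      ∃ L, IsGP (m + 1) (0, 0) (2 ^ m, 0) l L ∧ ((0 : ℤ), (2 : ℤ) ^ m) ∉ L) ∧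
    (2 ^ m ≤ l → l + 1 ≤ (sierpVerts (m + 1)).card →
      ∃ L, IsGP (m + 1) (2 ^ m, 0) (0, 2 ^ m) l L) ∧
    (2 ^ m ≤ l → l + 2 ≤ (sierpVerts (m + 1)).card →
      ∃ L, IsGP (m + 1) (2 ^ m, 0) (0, 2 ^ m) l L ∧ ((0 : ℤ), (0 : ℤ)) ∉ L) := by
  intro m
  induction m with
  | zero =>
    intro l
    have hcard : (sierpVerts 1).card = 3 := by decide
    rw [hcard]
    refine ⟨?_, ?_, ?_, ?_⟩ <;> intro h1 h2 <;> norm_num at h1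
    · rcases (by omega : l = 1 ∨ l = 2) with rfl | rfl
      · exact ⟨[(0, 0), (1, 0)], by refine ⟨?_, ?_, ?_, ?_, ?_, ?_⟩ <;> simp [sAdj, sierpEdges, sierpVerts, List.Chain', List.isChain_cons_cons] <;> decide⟩
      · exact ⟨[(0, 0), (0, 1), (1, 0)], by refine ⟨?_, ?_, ?_, ?_, ?_, ?_⟩ <;> simp [sAdj, sierpEdges, sierpVerts, List.Chain', List.isChain_cons_cons] <;> decide⟩
    · obtain rfl : l = 1 := by omega
      exact ⟨[(0, 0), (1, 0)], by refine ⟨⟨?_, ?_, ?_, ?_, ?_, ?_⟩, ?_⟩ <;> simp [sAdj, sierpEdges, sierpVerts, List.Chain', List.isChain_cons_cons] <;> decide⟩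
    · rcases (by omega : l = 1 ∨ l = 2) with rfl | rfl
      · exact ⟨[(1, 0), (0, 1)], by refine ⟨?_, ?_, ?_, ?_, ?_, ?_⟩ <;> simp [sAdj, sierpEdges, sierpVerts, List.Chain', List.isChain_cons_cons] <;> decide⟩
      · exact ⟨[(1, 0), (0, 0), (0, 1)], by refine ⟨?_, ?_, ?_, ?_, ?_, ?_⟩ <;> simp [sAdj, sierpEdges, sierpVerts, List.Chain', List.isChain_cons_cons] <;> decide⟩
    · obtain rfl : l = 1 := by omega
      exact ⟨[(1, 0), (0, 1)], by refine ⟨⟨?_, ?_, ?_, ?_, ?_, ?_⟩, ?_⟩ <;> simp [sAdj, sierpEdges, sierpVerts, List.Chain', List.isChain_cons_cons] <;> decide⟩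
  | succ k ih =>
    intro l
    -- arithmetic facts
    have hM := sierp_card k
    have hM2 := sierp_card (k + 1)
    set M := (sierpVerts (k + 1)).card with hMdef
    set M2 := (sierpVerts (k + 2)).card with hM2def
    have hee : (1 : ℕ) ≤ 2 ^ k := Nat.one_le_pow _ _ (by norm_num)
    have heg : 2 ^ k ≤ 3 ^ k := two_le_three_pow k
    have h43 := pow43 k
    have hp1 : (3 : ℕ) ^ (k + 1) = 3 * 3 ^ k := by ring
    have hp2 : (3 : ℕ) ^ (k + 2) = 9 * 3 ^ k := by ring
    have hq1 : (2 : ℕ) ^ (k + 1) = 2 * 2 ^ k := by ring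
    -- ih components, swapped and reversed
    have ihP0x : ∀ a, 2 ^ k ≤ a → a + 1 ≤ M → ∃ L, IsGP (k + 1) (0, 0) (2 ^ k, 0) a L :=
      fun a h h' => (ih a).1 h h'
    have ihA0x : ∀ a, 2 ^ k ≤ a → a + 2 ≤ M →
        ∃ L, IsGP (k + 1) (0, 0) (2 ^ k, 0) a L ∧ ((0 : ℤ), (2 : ℤ) ^ k) ∉ L :=
      fun a h h' => (ih a).2.1 h h'
    have ihPxy : ∀ a, 2 ^ k ≤ a → a + 1 ≤ M → ∃ L, IsGP (k + 1) (2 ^ k, 0) (0, 2 ^ k) a L :=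
      fun a h h' => (ih a).2.2.1 h h'
    have ihAxy : ∀ a, 2 ^ k ≤ a → a + 2 ≤ M →
        ∃ L, IsGP (k + 1) (2 ^ k, 0) (0, 2 ^ k) a L ∧ ((0 : ℤ), (0 : ℤ)) ∉ L :=
      fun a h h' => (ih a).2.2.2 h h'
    have ihP0y : ∀ a, 2 ^ k ≤ a → a + 1 ≤ M → ∃ L, IsGP (k + 1) (0, 0) (0, 2 ^ k) a L := by
      intro a h h'
      obtain ⟨L, hL⟩ := ihP0x a h h'
      exact ⟨L.map swp, hL.swap⟩
    have ihA0y : ∀ a, 2 ^ k ≤ a → a + 2 ≤ M →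
        ∃ L, IsGP (k + 1) (0, 0) (0, 2 ^ k) a L ∧ ((2 : ℤ) ^ k, (0 : ℤ)) ∉ L := by
      intro a h h'
      obtain ⟨L, hL, hLa⟩ := ihA0x a h h'
      exact ⟨L.map swp, hL.swap, fun hc => hLa (mem_swap.mp hc)⟩
    have ihPyx : ∀ a, 2 ^ k ≤ a → a + 1 ≤ M → ∃ L, IsGP (k + 1) (0, 2 ^ k) (2 ^ k, 0) a L := by
      intro a h h'
      obtain ⟨L, hL⟩ := ihPxy a h h'
      exact ⟨L.reverse, hL.reverse⟩
    have ihAx0 : ∀ a, 2 ^ k ≤ a → a + 2 ≤ M →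
        ∃ L, IsGP (k + 1) (2 ^ k, 0) (0, 0) a L ∧ ((0 : ℤ), (2 : ℤ) ^ k) ∉ L := by
      intro a h h'
      obtain ⟨L, hL, hLa⟩ := ihA0x a h h'
      exact ⟨L.reverse, hL.reverse, fun hc => hLa (List.mem_reverse.mp hc)⟩
    refine ⟨?_, ?_, ?_, ?_⟩
    -- C1 : plain 0 → X
    · intro h1 h2
      by_cases hcase : l + 2 ≤ 2 * M
      · obtain ⟨a, b, hab, ha1, ha2, hb1, hb2⟩ :
            ∃ a b : ℕ, a + b = l ∧ 2 ^ k ≤ a ∧ a + 1 ≤ M ∧ 2 ^ k ≤ b ∧ b + 1 ≤ M := by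
          by_cases hs : l ≤ M - 1 + 2 ^ k
          · exact ⟨2 ^ k, l - 2 ^ k, by omega⟩
          · exact ⟨l - (M - 1), M - 1, by omega⟩
        obtain ⟨La, hLa⟩ := ihP0x a ha1 ha2
        obtain ⟨Lb, hLb⟩ := ihP0x b hb1 hb2
        obtain ⟨L, hL, _⟩ := T1 hLa hLb
        exact ⟨L, hab ▸ hL⟩
      · obtain ⟨a, c, b, hab, ha1, ha2, hc1, hc2, hb1, hb2⟩ :
            ∃ a c b : ℕ, a + c + b = l ∧ 2 ^ k ≤ a ∧ a + 2 ≤ M ∧ 2 ^ k ≤ c ∧ c + 1 ≤ M ∧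
              2 ^ k ≤ b ∧ b + 1 ≤ M := by
          by_cases hs : l ≤ 2 * M - 2 + 2 ^ k
          · exact ⟨2 ^ k, l - 2 ^ k - (M - 1), M - 1, by omega⟩
          · exact ⟨l - (2 * M - 2), M - 1, M - 1, by omega⟩
        obtain ⟨La, hLa, hLav⟩ := ihA0y a ha1 ha2
        obtain ⟨Lc, hLc⟩ := ihP0x c hc1 hc2
        obtain ⟨Lb, hLb⟩ := ihPyx b hb1 hb2
        obtain ⟨L, hL, _⟩ := T2 hLa hLav hLc hLb
        exact ⟨L, hab ▸ hL⟩
    -- C2 : avoiding 0 → X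
    · intro h1 h2
      by_cases hcase : l + 2 ≤ 2 * M
      · obtain ⟨a, b, hab, ha1, ha2, hb1, hb2⟩ :
            ∃ a b : ℕ, a + b = l ∧ 2 ^ k ≤ a ∧ a + 1 ≤ M ∧ 2 ^ k ≤ b ∧ b + 1 ≤ M := by
          by_cases hs : l ≤ M - 1 + 2 ^ k
          · exact ⟨2 ^ k, l - 2 ^ k, by omega⟩
          · exact ⟨l - (M - 1), M - 1, by omega⟩
        obtain ⟨La, hLa⟩ := ihP0x a ha1 ha2
        obtain ⟨Lb, hLb⟩ := ihP0x b hb1 hb2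
        obtain ⟨L, hL, hLv⟩ := T1 hLa hLb
        exact ⟨L, hab ▸ hL, hLv⟩
      · obtain ⟨a, c, b, hab, ha1, ha2, hc1, hc2, hb1, hb2⟩ :
            ∃ a c b : ℕ, a + c + b = l ∧ 2 ^ k ≤ a ∧ a + 2 ≤ M ∧ 2 ^ k ≤ c ∧ c + 2 ≤ M ∧
              2 ^ k ≤ b ∧ b + 1 ≤ M := by
          by_cases hs : l ≤ 2 * M - 3 + 2 ^ k
          · exact ⟨2 ^ k, l - 2 ^ k - (M - 1), M - 1, by omega⟩
          · exact ⟨l - (2 * M - 3), M - 2, M - 1, by omega⟩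
        obtain ⟨La, hLa, hLav⟩ := ihA0y a ha1 ha2
        obtain ⟨Lc, hLc, hLcv⟩ := ihA0x c hc1 hc2
        obtain ⟨Lb, hLb⟩ := ihPyx b hb1 hb2
        obtain ⟨L, hL, hLv⟩ := T2 hLa hLav hLc hLb
        exact ⟨L, hab ▸ hL, fun hc => hLcv (hLv hc)⟩
    -- C3 : plain X → Y
    · intro h1 h2
      by_cases hcase : l + 2 ≤ 2 * M
      · obtain ⟨a, b, hab, ha1, ha2, hb1, hb2⟩ :
            ∃ a b : ℕ, a + b = l ∧ 2 ^ k ≤ a ∧ a + 1 ≤ M ∧ 2 ^ k ≤ b ∧ b + 1 ≤ M := by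
          by_cases hs : l ≤ M - 1 + 2 ^ k
          · exact ⟨2 ^ k, l - 2 ^ k, by omega⟩
          · exact ⟨l - (M - 1), M - 1, by omega⟩
        obtain ⟨La, hLa⟩ := ihPxy a ha1 ha2
        obtain ⟨Lb, hLb⟩ := ihPxy b hb1 hb2
        obtain ⟨L, hL, _⟩ := T3 hLa hLb
        exact ⟨L, hab ▸ hL⟩
      · obtain ⟨a, c, b, hab, ha1, ha2, hc1, hc2, hb1, hb2⟩ :
            ∃ a c b : ℕ, a + c + b = l ∧ 2 ^ k ≤ a ∧ a + 2 ≤ M ∧ 2 ^ k ≤ c ∧ c + 1 ≤ M ∧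
              2 ^ k ≤ b ∧ b + 1 ≤ M := by
          by_cases hs : l ≤ 2 * M - 2 + 2 ^ k
          · exact ⟨2 ^ k, l - 2 ^ k - (M - 1), M - 1, by omega⟩
          · exact ⟨l - (2 * M - 2), M - 1, M - 1, by omega⟩
        obtain ⟨La, hLa, hLav⟩ := ihAx0 a ha1 ha2
        obtain ⟨Lc, hLc⟩ := ihPxy c hc1 hc2
        obtain ⟨Lb, hLb⟩ := ihP0y b hb1 hb2
        obtain ⟨L, hL, _⟩ := T4 hLa hLav hLc hLb
        exact ⟨L, hab ▸ hL⟩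
    -- C4 : avoiding X → Y
    · intro h1 h2
      by_cases hcase : l + 2 ≤ 2 * M
      · obtain ⟨a, b, hab, ha1, ha2, hb1, hb2⟩ :
            ∃ a b : ℕ, a + b = l ∧ 2 ^ k ≤ a ∧ a + 1 ≤ M ∧ 2 ^ k ≤ b ∧ b + 1 ≤ M := by
          by_cases hs : l ≤ M - 1 + 2 ^ k
          · exact ⟨2 ^ k, l - 2 ^ k, by omega⟩
          · exact ⟨l - (M - 1), M - 1, by omega⟩
        obtain ⟨La, hLa⟩ := ihPxy a ha1 ha2
        obtain ⟨Lb, hLb⟩ := ihPxy b hb1 hb2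
        obtain ⟨L, hL, hLv⟩ := T3 hLa hLb
        exact ⟨L, hab ▸ hL, hLv⟩
      · obtain ⟨a, c, b, hab, ha1, ha2, hc1, hc2, hb1, hb2⟩ :
            ∃ a c b : ℕ, a + c + b = l ∧ 2 ^ k ≤ a ∧ a + 2 ≤ M ∧ 2 ^ k ≤ c ∧ c + 2 ≤ M ∧
              2 ^ k ≤ b ∧ b + 1 ≤ M := by
          by_cases hs : l ≤ 2 * M - 3 + 2 ^ k
          · exact ⟨2 ^ k, l - 2 ^ k - (M - 1), M - 1, by omega⟩
          · exact ⟨l - (2 * M - 3), M - 2, M - 1, by omega⟩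
        obtain ⟨La, hLa, hLav⟩ := ihAx0 a ha1 ha2
        obtain ⟨Lc, hLc, hLcv⟩ := ihAxy c hc1 hc2
        obtain ⟨Lb, hLb⟩ := ihP0y b hb1 hb2
        obtain ⟨L, hL, hLv⟩ := T4 hLa hLav hLc hLb
        exact ⟨L, hab ▸ hL, fun hc => hLcv (hLv hc)⟩

lemma all_pairs (m l : ℕ) (h1 : 2 ^ m ≤ l) (h2 : l + 1 ≤ (sierpVerts (m + 1)).card)
    (u v : ℤ × ℤ)
    (hu : u = (0, 0) ∨ u = ((2 : ℤ) ^ m, 0) ∨ u = (0, (2 : ℤ) ^ m))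
    (hv : v = (0, 0) ∨ v = ((2 : ℤ) ^ m, 0) ∨ v = (0, (2 : ℤ) ^ m))
    (huv : u ≠ v) : ∃ L, IsGP (m + 1) u v l L := by
  have h0x : ∃ L, IsGP (m + 1) (0, 0) (2 ^ m, 0) l L := (key m l).1 h1 h2
  have hxy : ∃ L, IsGP (m + 1) (2 ^ m, 0) (0, 2 ^ m) l L := (key m l).2.2.1 h1 h2
  have h0y : ∃ L, IsGP (m + 1) (0, 0) (0, 2 ^ m) l L := by
    obtain ⟨L, hL⟩ := h0x
    exact ⟨L.map swp, by simpa [swp] using hL.swap⟩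
  rcases hu with rfl | rfl | rfl <;> rcases hv with rfl | rfl | rfl
  · exact absurd rfl huv
  · exact h0x
  · exact h0y
  · obtain ⟨L, hL⟩ := h0x; exact ⟨L.reverse, hL.reverse⟩
  · exact absurd rfl huv
  · exact hxy
  · obtain ⟨L, hL⟩ := h0y; exact ⟨L.reverse, hL.reverse⟩
  · obtain ⟨L, hL⟩ := hxy; exact ⟨L.reverse, hL.reverse⟩
  · exact absurd rfl huv

theorem sierp_corner_paths (n : ℕ) (hn : 1 ≤ n)
    (u v : {p : ℤ × ℤ // p ∈ sierpVerts n})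
    (hu : u.1 ∈ sierpCorners n) (hv : v.1 ∈ sierpCorners n) (huv : u ≠ v)
    (l : ℕ) (hl1 : 2 ^ (n - 1) ≤ l) (hl2 : l ≤ (sierpVerts n).card - 1) :
    ∃ p : (sierpGraph n).Walk u v, p.IsPath ∧ p.length = l := by
  obtain ⟨m, rfl⟩ : ∃ m, n = m + 1 := ⟨n - 1, by omega⟩
  have hmm : m + 1 - 1 = m := rfl
  rw [hmm] at hl1
  have hcard := sierp_card m
  have h3 : (1 : ℕ) ≤ 3 ^ (m + 1) := Nat.one_le_pow _ _ (by norm_num)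
  have h2' : l + 1 ≤ (sierpVerts (m + 1)).card := by omega
  simp only [sierpCorners, hmm, Finset.mem_insert, Finset.mem_singleton] at hu hv
  obtain ⟨L, hL⟩ := all_pairs m l hl1 h2' u.1 v.1 hu hv (fun h => huv (Subtype.ext h))
  obtain ⟨w, hp, hlen⟩ := hL.toWalk u.2 v.2
  exact ⟨w, hp, hlen⟩
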